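/- arXiv:2002.07750 — 4 statements merged into one kernel-verified Lean document; each statement's English description precedes it below -/
import Mathlib

section
/- Let F be a field, and let ℓ, K_c, R', X be positive integers. Set L = ℓ·K_c and R = R'(ℓ+1)K_c + 2X − 1, and suppose |F| ≥ R + L. Let f_{1,1}, f_{1,2}, …, f_{ℓ,K_c}, α_1, α_2, …, α_R be R + L pairwise distinct elements of F. Then the R × R Confluent Cauchy–Vandermonde matrix, whose row indexed by r ∈ {1,…,R} consists of the entries 1/(f_{l,k} − α_r)^{R'−i} for all l ∈ {1,…,ℓ}, k ∈ {1,…,K_c}, i ∈ {0,…,R'−1}, followed by the entries α_r^{j} for j ∈ {0,…,R'K_c + 2X − 2}, is invertible over F. -/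
open Polynomial Finset

lemma ccv_aux_coeff {F : Type*} [Semiring F] {n : ℕ} (c : Fin n → F)
    (h : ∑ i : Fin n, Polynomial.C (c i) * Polynomial.X ^ (i : ℕ) = 0) (i : Fin n) :
    c i = 0 := by
  have h2 := congrArg (fun p => Polynomial.coeff p (i : ℕ)) h
  simp only [finset_sum_coeff, coeff_C_mul_X_pow, coeff_zero] at h2
  rw [Finset.sum_eq_single i] at h2
  · simpa using h2
  · intro b _ hb
    rw [if_neg (by simp [Fin.val_eq_val]; exact fun h' => hb h'.symm)]
  · simp

lemma ccv_aux_shift {F : Type*} [CommRing F] (x0 : F) {n : ℕ} (c : Fin n → F)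
    (h : ∑ i : Fin n, Polynomial.C (c i) * (Polynomial.C x0 - Polynomial.X) ^ (i : ℕ) = 0)
    (i : Fin n) : c i = 0 := by
  apply ccv_aux_coeff c _ i
  have h2 := congrArg (fun p => p.comp (Polynomial.C x0 - Polynomial.X)) h
  simp only [Polynomial.sum_comp, mul_comp, C_comp, pow_comp, sub_comp, X_comp, zero_comp,
    sub_sub_cancel] at h2
  exact h2

lemma ccv_key {F : Type*} [Field F] {ι : Type*} [Fintype ι] [DecidableEq ι]
    {R' d N : ℕ} (hR' : 0 < R') (hd : 0 < d)
    (φ : ι → F) (α : Fin N → F) (hφ : Function.Injective φ) (hα : Function.Injective α)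
    (hφα : ∀ p r, φ p ≠ α r)
    (hN : Fintype.card ι * R' + d ≤ N)
    (u : ι → Fin R' → F) (w : Fin d → F)
    (hrow : ∀ r, (∑ p, ∑ i : Fin R', u p i / (φ p - α r) ^ (R' - (i : ℕ)))
        + ∑ j : Fin d, w j * α r ^ (j : ℕ) = 0) :
    (∀ p i, u p i = 0) ∧ (∀ j, w j = 0) := by
  classical
  set Q : F[X] := ∏ q : ι, (C (φ q) - X) ^ R' with hQ
  set Qn : ι → F[X] := fun p => ∏ q ∈ univ.erase p, (C (φ q) - X) ^ R' with hQn
  set h : ι → F[X] := fun p => ∑ i : Fin R', C (u p i) * (C (φ p) - X) ^ (i : ℕ) with hh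
  set W : F[X] := ∑ j : Fin d, C (w j) * X ^ (j : ℕ) with hW
  set P : F[X] := (∑ p, h p * Qn p) + W * Q with hP
  have hsub_ne : ∀ (p : ι) (r : Fin N), φ p - α r ≠ 0 := fun p r => sub_ne_zero.2 (hφα p r)
  have hdeg1 : ∀ a : F, (C a - X).natDegree = 1 := fun a => by
    rw [show C a - X = -(X - C a) by ring, natDegree_neg, natDegree_X_sub_C]
  have hne1 : ∀ a : F, (C a - X) ≠ 0 := by
    intro a h0
    have := hdeg1 a
    rw [h0] at this
    simp at this
  -- evaluation at the α r
  have heval : ∀ r, P.eval (α r) = 0 := by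
    intro r
    have hQeval : ∀ p : ι, Q.eval (α r) = (φ p - α r) ^ R' * (Qn p).eval (α r) := by
      intro p
      rw [hQ, hQn, eval_prod, eval_prod, ← Finset.mul_prod_erase _ _ (mem_univ p)]
      simp
    have hmain : P.eval (α r) = Q.eval (α r) *
        ((∑ p, ∑ i : Fin R', u p i / (φ p - α r) ^ (R' - (i : ℕ)))
          + ∑ j : Fin d, w j * α r ^ (j : ℕ)) := by
      rw [hP, eval_add, eval_mul, eval_finset_sum, mul_add]
      congr 1
      · rw [Finset.mul_sum]
        refine Finset.sum_congr rfl fun p _ => ?_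
        rw [eval_mul, hh]
        simp only [eval_finset_sum, eval_mul, eval_pow, eval_sub, eval_C, eval_X]
        rw [Finset.sum_mul, Finset.mul_sum]
        refine Finset.sum_congr rfl fun i _ => ?_
        rw [hQeval p]
        have hsplit : (φ p - α r) ^ R'
            = (φ p - α r) ^ (R' - (i : ℕ)) * (φ p - α r) ^ (i : ℕ) := by
          rw [← pow_add, Nat.sub_add_cancel (le_of_lt i.isLt)]
        rw [hsplit]
        have ht : (φ p - α r) ^ (R' - (i : ℕ)) ≠ 0 := pow_ne_zero _ (hsub_ne p r)
        field_simp
      · rw [hW]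
        simp only [eval_finset_sum, eval_mul, eval_pow, eval_C, eval_X]
        ring
    rw [hmain, hrow r, mul_zero]
  -- degree bounds
  have hQdeg : Q.natDegree ≤ Fintype.card ι * R' := by
    calc Q.natDegree ≤ ∑ q : ι, ((C (φ q) - X) ^ R').natDegree := natDegree_prod_le _ _
    _ = ∑ _q : ι, R' := by
        refine Finset.sum_congr rfl fun q _ => ?_
        rw [natDegree_pow, hdeg1, mul_one]
    _ = Fintype.card ι * R' := by rw [Finset.sum_const, card_univ, smul_eq_mul]
  have hQndeg : ∀ p : ι, (Qn p).natDegree ≤ (Fintype.card ι - 1) * R' := by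
    intro p
    calc (Qn p).natDegree ≤ ∑ q ∈ univ.erase p, ((C (φ q) - X) ^ R').natDegree :=
          natDegree_prod_le _ _
    _ = ∑ _q ∈ univ.erase p, R' := by
        refine Finset.sum_congr rfl fun q _ => ?_
        rw [natDegree_pow, hdeg1, mul_one]
    _ = (Fintype.card ι - 1) * R' := by
        rw [Finset.sum_const, smul_eq_mul, card_erase_of_mem (mem_univ p), card_univ]
  have hhdeg : ∀ p : ι, (h p).natDegree ≤ R' - 1 := by
    intro p
    rw [hh]
    refine natDegree_sum_le_of_forall_le _ _ fun i _ => ?_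
    refine (natDegree_mul_le).trans ?_
    rw [natDegree_C, natDegree_pow, hdeg1, mul_one, zero_add]
    omega
  have hWdeg : W.natDegree ≤ d - 1 := by
    rw [hW]
    refine natDegree_sum_le_of_forall_le _ _ fun j _ => ?_
    refine (natDegree_mul_le).trans ?_
    rw [natDegree_C, natDegree_X_pow, zero_add]
    omega
  -- P vanishes
  have hcard1 : ∀ p : ι, 0 < Fintype.card ι := fun p => Fintype.card_pos_iff.2 ⟨p⟩
  have hPdeg : P.natDegree ≤ N - 1 := by
    rw [hP]
    refine natDegree_add_le_of_degree_le ?_ ?_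
    · refine natDegree_sum_le_of_forall_le _ _ fun p _ => ?_
      refine (natDegree_mul_le).trans ?_
      have h1 := hhdeg p
      have h2 := hQndeg p
      have h3 : (Fintype.card ι - 1) * R' = Fintype.card ι * R' - R' := by
        rw [Nat.sub_mul, one_mul]
      have h4 : R' ≤ Fintype.card ι * R' := Nat.le_mul_of_pos_left _ (hcard1 p)
      omega
    · refine (natDegree_mul_le).trans ?_
      omega
  have hP0 : P = 0 := by
    refine eq_zero_of_natDegree_lt_card_of_eval_eq_zero P hα heval ?_
    rw [Fintype.card_fin]
    omega
  -- extract the Cauchy coefficients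
  have hu : ∀ p i, u p i = 0 := by
    intro p0
    have hmem : p0 ∈ (univ : Finset ι) := mem_univ p0
    have hsplitP : h p0 * Qn p0 = -((∑ p ∈ univ.erase p0, h p * Qn p) + W * Q) := by
      have := hP0
      rw [hP, ← Finset.add_sum_erase _ _ hmem] at this
      linear_combination this
    have hdvd : (C (φ p0) - X) ^ R' ∣ h p0 * Qn p0 := by
      rw [hsplitP, dvd_neg]
      refine dvd_add (Finset.dvd_sum fun p hp => ?_) ?_
      · refine Dvd.dvd.mul_left ?_ (h p)
        rw [hQn]
        exact Finset.dvd_prod_of_mem _ (Finset.mem_erase.2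
          ⟨(Finset.mem_erase.1 hp).1.symm ∘ Eq.symm ∘ Eq.symm, mem_univ p0⟩)
      · exact Dvd.dvd.mul_left (by rw [hQ]; exact Finset.dvd_prod_of_mem _ hmem) W
    have hprime : Prime (C (φ p0) - X) := by
      rw [show C (φ p0) - X = -(X - C (φ p0)) by ring]
      exact (prime_X_sub_C (φ p0)).neg
    have hnotdvd : ¬ (C (φ p0) - X) ∣ Qn p0 := by
      intro hdvd'
      obtain ⟨s, hs⟩ := hdvd'
      have hz : (Qn p0).eval (φ p0) = 0 := by rw [hs]; simp
      rw [hQn, eval_prod] at hz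
      obtain ⟨q, hq, hq0⟩ := Finset.prod_eq_zero_iff.1 hz
      simp only [eval_pow, eval_sub, eval_C, eval_X] at hq0
      have : φ q - φ p0 = 0 := pow_eq_zero_iff (by omega) |>.1 hq0
      exact (Finset.mem_erase.1 hq).1 (hφ (sub_eq_zero.1 this))
    have hdvd_h : (C (φ p0) - X) ^ R' ∣ h p0 :=
      hprime.pow_dvd_of_dvd_mul_right R' hnotdvd hdvd
    have hh0 : h p0 = 0 := by
      by_contra hne
      have hd1 := natDegree_le_of_dvd hdvd_h hne
      rw [natDegree_pow, hdeg1, mul_one] at hd1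
      have := hhdeg p0
      omega
    intro i
    refine ccv_aux_shift (φ p0) (u p0) ?_ i
    rw [hh] at hh0
    exact hh0
  -- extract the Vandermonde coefficients
  have hQne : Q ≠ 0 := by
    rw [hQ]
    exact Finset.prod_ne_zero_iff.2 fun q _ => pow_ne_zero _ (hne1 _)
  have hW0 : W = 0 := by
    have hPW : P = W * Q := by
      rw [hP, Finset.sum_eq_zero fun p _ => by simp [hh, hu p], zero_add]
    have := hP0
    rw [hPW] at this
    exact (mul_eq_zero.1 this).resolve_right hQne
  refine ⟨hu, fun j => ccv_aux_coeff w ?_ j⟩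
  rw [hW] at hW0
  exact hW0



/-- **Invertibility of the Confluent Cauchy–Vandermonde matrix.**
Let `F` be a field, `ℓ, K_c, R', X` positive integers, `L = ℓ K_c`,
`R = R'(ℓ+1)K_c + 2X - 1`, `|F| ≥ R + L`.  If the `f l k` and `α r` are
`R + L` pairwise distinct elements of `F`, then the `R × R` matrix whose row
`r` consists of the entries `1/(f l k - α r)^(R'-i)` (for `l ∈ [ℓ]`,
`k ∈ [K_c]`, `i ∈ {0,…,R'-1}`) followed by the powers `α r ^ j`
(for `j ∈ {0,…,R' K_c + 2X - 2}`) is invertible. -/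
theorem confluent_cauchy_vandermonde_invertible
    (F : Type*) [Field F] (ℓ K_c R' X : ℕ)
    (hℓ : 0 < ℓ) (hK : 0 < K_c) (hR' : 0 < R') (hX : 0 < X)
    (L R : ℕ) (hL : L = ℓ * K_c) (hR : R = R' * (ℓ + 1) * K_c + 2 * X - 1)
    (hcard : ((R + L : ℕ) : Cardinal) ≤ Cardinal.mk F)
    (f : Fin ℓ → Fin K_c → F) (α : Fin R → F)
    (hdist : Function.Injective
      (Sum.elim (fun p : Fin ℓ × Fin K_c => f p.1 p.2) α))
    (e : ((Fin ℓ × Fin K_c × Fin R') ⊕ Fin (R' * K_c + 2 * X - 1)) ≃ Fin R) :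
    IsUnit
      ((Matrix.of fun (r : Fin R)
          (c : (Fin ℓ × Fin K_c × Fin R') ⊕ Fin (R' * K_c + 2 * X - 1)) =>
            Sum.elim
              (fun p : Fin ℓ × Fin K_c × Fin R' =>
                (1 : F) / (f p.1 p.2.1 - α r) ^ (R' - (p.2.2 : ℕ)))
              (fun j : Fin (R' * K_c + 2 * X - 1) => α r ^ (j : ℕ)) c).submatrix
        id e.symm) := by
  classical
  rw [Matrix.isUnit_iff_isUnit_det, isUnit_iff_ne_zero]
  intro hdet
  obtain ⟨v, hv0, hv⟩ := Matrix.exists_mulVec_eq_zero_iff.2 hdet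
  have hφ : Function.Injective (fun p : Fin ℓ × Fin K_c => f p.1 p.2) := by
    intro p q hpq
    have h1 : Sum.elim (fun p : Fin ℓ × Fin K_c => f p.1 p.2) α (Sum.inl p)
        = Sum.elim (fun p : Fin ℓ × Fin K_c => f p.1 p.2) α (Sum.inl q) := hpq
    simpa using hdist h1
  have hα : Function.Injective α := by
    intro r s hrs
    have h1 : Sum.elim (fun p : Fin ℓ × Fin K_c => f p.1 p.2) α (Sum.inr r)
        = Sum.elim (fun p : Fin ℓ × Fin K_c => f p.1 p.2) α (Sum.inr s) := hrs
    simpa using hdist h1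
  have hφα : ∀ (p : Fin ℓ × Fin K_c) (r : Fin R), f p.1 p.2 ≠ α r := by
    intro p r hpr
    have h1 : Sum.elim (fun p : Fin ℓ × Fin K_c => f p.1 p.2) α (Sum.inl p)
        = Sum.elim (fun p : Fin ℓ × Fin K_c => f p.1 p.2) α (Sum.inr r) := hpr
    simpa using hdist h1
  have hd : 0 < R' * K_c + 2 * X - 1 := by
    have h2 : 0 < R' * K_c := Nat.mul_pos hR' hK
    omega
  have hN : Fintype.card (Fin ℓ × Fin K_c) * R' + (R' * K_c + 2 * X - 1) ≤ R := by
    have h1 : R' * (ℓ + 1) * K_c = ℓ * K_c * R' + R' * K_c := by ring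
    rw [hR, h1]
    simp only [Fintype.card_prod, Fintype.card_fin]
    have h2 : 0 < R' * K_c := Nat.mul_pos hR' hK
    generalize ℓ * K_c * R' = a
    generalize R' * K_c = b at h2 ⊢
    omega
  have hrow : ∀ r : Fin R,
      (∑ p : Fin ℓ × Fin K_c, ∑ i : Fin R',
          v (e (Sum.inl (p.1, p.2, i))) / (f p.1 p.2 - α r) ^ (R' - (i : ℕ)))
        + ∑ j : Fin (R' * K_c + 2 * X - 1), v (e (Sum.inr j)) * α r ^ (j : ℕ) = 0 := by
    intro r
    have h1 := congrFun hv r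
    simp only [Matrix.mulVec, dotProduct, Matrix.submatrix_apply, id_eq,
      Matrix.of_apply, Pi.zero_apply] at h1
    rw [← Equiv.sum_comp e (fun c' => Sum.elim
        (fun p : Fin ℓ × Fin K_c × Fin R' =>
          (1 : F) / (f p.1 p.2.1 - α r) ^ (R' - (p.2.2 : ℕ)))
        (fun j : Fin (R' * K_c + 2 * X - 1) => α r ^ (j : ℕ)) (e.symm c') * v c')] at h1
    simp only [Equiv.symm_apply_apply] at h1
    rw [Fintype.sum_sum_type] at h1
    rw [← h1]
    congr 1
    · simp only [Fintype.sum_prod_type]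
      refine Finset.sum_congr rfl fun l _ => ?_
      refine Finset.sum_congr rfl fun k _ => ?_
      refine Finset.sum_congr rfl fun i _ => ?_
      simp only [Sum.elim_inl]
      rw [one_div_mul_eq_div]
    · refine Finset.sum_congr rfl fun j _ => ?_
      simp only [Sum.elim_inr]
      rw [mul_comm]
  have key := ccv_key hR' hd (fun p : Fin ℓ × Fin K_c => f p.1 p.2) α hφ hα hφα hN
      (fun p i => v (e (Sum.inl (p.1, p.2, i)))) (fun j => v (e (Sum.inr j))) hrow
  refine hv0 (funext fun c' => ?_)
  show v c' = 0
  obtain ⟨c, rfl⟩ := e.surjective c'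
  cases c with
  | inl q => exact key.1 (q.1, q.2.1) q.2.2
  | inr j => exact key.2 j
end

section
/- Let R be a (possibly noncommutative) ring, and let m, p, n be positive integers. Let A : {1,…,m} × {1,…,p} → R and B : {1,…,p} × {1,…,n} → R be families of ring elements, and define the polynomials P(y) = Σ_{m'=1}^{m} Σ_{p'=1}^{p} A(m',p') · y^{(p'−1) + p(m'−1)} and Q(y) = Σ_{p''=1}^{p} Σ_{n''=1}^{n} B(p'',n'') · y^{(p−p'') + pm(n''−1)} in R[y]. Then for every m' ∈ {1,…,m} and n'' ∈ {1,…,n}, the coefficient of y^{(p−1) + p(m'−1) + pm(n''−1)} in the product P(y)·Q(y) equals Σ_{p'=1}^{p} A(m',p')·B(p',n''), i.e., the (m',n'') block of the block-matrix product of A and B. -/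
open Polynomial in
private lemma int_split {p x y : ℤ} (hp : 0 < p) (hx : |x| < p) (h : x + p * y = 0) :
    x = 0 ∧ y = 0 := by
  have hx0 : x = 0 := Int.eq_zero_of_abs_lt_dvd ⟨-y, by linarith⟩ hx
  refine ⟨hx0, ?_⟩
  have : p * y = 0 := by omega
  rcases mul_eq_zero.1 this with h | h
  · omega
  · exact h

private lemma key {p m n : ℕ} (p1 p2 : Fin p) (m1 m2 : Fin m) (n1 n2 : Fin n)
    (h : ((p1 : ℕ) + p * (m1 : ℕ)) + ((p - 1 - (p2 : ℕ)) + p * m * (n1 : ℕ))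
        = (p - 1) + p * (m2 : ℕ) + p * m * (n2 : ℕ)) :
    p1 = p2 ∧ m1 = m2 ∧ n1 = n2 := by
  have hp1 := p1.isLt
  have hp2 := p2.isLt
  have hm1 := m1.isLt
  have hm2 := m2.isLt
  have hp : 0 < p := p1.pos
  have hm : 0 < m := m1.pos
  have hz : ((p1 : ℤ) - p2) + (p : ℤ) * (((m1 : ℤ) - m2) + (m : ℤ) * ((n1 : ℤ) - n2)) = 0 := by
    have := congrArg (Nat.cast : ℕ → ℤ) h
    push_cast [Nat.cast_sub (by omega : (p2 : ℕ) ≤ p - 1)] at this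
    ring_nf
    ring_nf at this
    linarith
  have h1 := int_split (by exact_mod_cast hp) (by rw [abs_lt]; omega) hz
  have h2 := int_split (by exact_mod_cast hm) (by rw [abs_lt]; omega) h1.2
  refine ⟨Fin.ext ?_, Fin.ext ?_, Fin.ext ?_⟩ <;> omega

open Polynomial in
/-- **Coefficient extraction for Entangled Polynomial codes.**
For families `A : [m]×[p] → R` and `B : [p]×[n] → R` over a (possibly
noncommutative) ring `R`, with
`P(y) = Σ_{m',p'} A(m',p') y^{(p'-1)+p(m'-1)}` and
`Q(y) = Σ_{p'',n''} B(p'',n'') y^{(p-p'')+pm(n''-1)}` (here indices start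
from `0`), the coefficient of `y^{(p-1)+p(m'-1)+pm(n''-1)}` in `P·Q` is the
block-matrix product entry `Σ_{p'} A(m',p') B(p',n'')`. -/
theorem entangled_polynomial_coeff_extraction
    (R : Type*) [Ring R] (m p n : ℕ) (hm : 0 < m) (hp : 0 < p) (hn : 0 < n)
    (A : Fin m → Fin p → R) (B : Fin p → Fin n → R)
    (P Q : Polynomial R)
    (hP : P = ∑ m' : Fin m, ∑ p' : Fin p,
      C (A m' p') * X ^ ((p' : ℕ) + p * (m' : ℕ)))
    (hQ : Q = ∑ p'' : Fin p, ∑ n'' : Fin n,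
      C (B p'' n'') * X ^ ((p - 1 - (p'' : ℕ)) + p * m * (n'' : ℕ)))
    (m' : Fin m) (n'' : Fin n) :
    (P * Q).coeff ((p - 1) + p * (m' : ℕ) + p * m * (n'' : ℕ))
      = ∑ p' : Fin p, A m' p' * B p' n'' := by
  subst hP hQ
  rw [Finset.sum_mul_sum]
  simp only [Finset.sum_mul, Finset.mul_sum, finset_sum_coeff]
  have hterm : ∀ (m1 : Fin m) (p1 p2 : Fin p) (n1 : Fin n),
      (C (A m1 p1) * X ^ ((p1 : ℕ) + p * (m1 : ℕ)) *
        (C (B p2 n1) * X ^ ((p - 1 - (p2 : ℕ)) + p * m * (n1 : ℕ)))).coeff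
        ((p - 1) + p * (m' : ℕ) + p * m * (n'' : ℕ))
      = if p1 = p2 ∧ m1 = m' ∧ n1 = n'' then A m1 p1 * B p2 n1 else 0 := by
    intro m1 p1 p2 n1
    have hre : C (A m1 p1) * X ^ ((p1 : ℕ) + p * (m1 : ℕ)) *
        (C (B p2 n1) * X ^ ((p - 1 - (p2 : ℕ)) + p * m * (n1 : ℕ)))
        = C (A m1 p1 * B p2 n1) *
          X ^ (((p1 : ℕ) + p * (m1 : ℕ)) + ((p - 1 - (p2 : ℕ)) + p * m * (n1 : ℕ))) := by
      rw [mul_assoc, ← mul_assoc (X ^ _), X_pow_mul, mul_assoc (C (B p2 n1)),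
        ← pow_add, ← mul_assoc, ← C_mul]
    rw [hre, coeff_C_mul, coeff_X_pow]
    by_cases hc : ((p1 : ℕ) + p * (m1 : ℕ)) + ((p - 1 - (p2 : ℕ)) + p * m * (n1 : ℕ))
        = (p - 1) + p * (m' : ℕ) + p * m * (n'' : ℕ)
    · obtain ⟨rfl, rfl, rfl⟩ := key p1 p2 m1 m' n1 n'' hc
      rw [if_pos hc.symm, if_pos ⟨rfl, rfl, rfl⟩, mul_one]
    · rw [if_neg (fun h => hc h.symm), mul_zero, if_neg]
      rintro ⟨rfl, rfl, rfl⟩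
      refine hc ?_
      have hlt := p1.isLt
      generalize p * (m1 : ℕ) = a
      generalize p * m * (n1 : ℕ) = b
      omega
  simp only [hterm]
  simp [ite_and, Finset.sum_ite_eq, Finset.sum_ite_eq']
end

section
/- Let F be a field, K and R' positive integers, p a positive integer, and f_1, …, f_K pairwise distinct elements of F. Fix k ∈ {1,…,K} and let c_{k,i} be the coefficients of Ψ_k(y) = ∏_{k' ≠ k} (y + (f_{k'} − f_k))^{R'} = Σ_{i=0}^{R'(K−1)} c_{k,i} y^i. Let G(y) = Σ_{i=0}^{R'+p−2} C_{i+1} y^i ∈ F[y] be any polynomial of degree at most R' + p − 2 with coefficients C_1, …, C_{R'+p−1}. Then, in the field of rational functions F(α), the identity ∏_{k' ≠ k} (f_{k'} − α)^{R'} · G(f_k − α) / (f_k − α)^{R'} = Σ_{i=0}^{R'−1} ( Σ_{i'=0}^{i} c_{k,i−i'} C_{i'+1} ) / (f_k − α)^{R'−i} + W(α) holds, where W(α) ∈ F[α] is a polynomial in α of degree at most R'(K−1) + p − 2 (with W = 0 interpreted as degree −1; when K = 1 and p = 1, W = 0). -/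
open Polynomial in
/-- **Cross-subspace alignment identity.**
For pairwise distinct `f_1, …, f_K` in `F`, `Ψ_k(y) = ∏_{k'≠k}(y+(f_{k'}-f_k))^{R'}`
with coefficients `c_{k,i}`, and any `G ∈ F[y]` of degree at most `R'+p-2` with
coefficients `C_{i+1} = G.coeff i`, the rational function
`∏_{k'≠k}(f_{k'}-α)^{R'} · G(f_k-α)/(f_k-α)^{R'}` decomposes as the sum of the
principal parts `(Σ_{i'≤i} c_{k,i-i'} C_{i'+1})/(f_k-α)^{R'-i}` for
`i = 0,…,R'-1`, plus a polynomial `W(α)` of degree at most `R'(K-1)+p-2`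
(with `deg 0 = -1`, so `W = 0` when `K = 1` and `p = 1`). -/
theorem cross_subspace_alignment_identity
    (F : Type*) [Field F] (K R' p : ℕ) (hK : 0 < K) (hR' : 0 < R') (hp : 0 < p)
    (f : Fin K → F) (hf : Function.Injective f) (k : Fin K)
    (G : Polynomial F) (hG : G.degree ≤ ((R' + p - 2 : ℕ) : WithBot ℕ)) :
    ∃ W : Polynomial F,
      W.degree < ((R' * (K - 1) + p - 1 : ℕ) : WithBot ℕ) ∧
      (∏ k' ∈ Finset.univ.erase k, (RatFunc.C (f k') - RatFunc.X) ^ R') *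
          Polynomial.aeval (RatFunc.C (f k) - RatFunc.X) G /
          (RatFunc.C (f k) - RatFunc.X) ^ R'
        = (∑ i ∈ Finset.range R',
            RatFunc.C (∑ i' ∈ Finset.range (i + 1),
                (∏ k' ∈ Finset.univ.erase k,
                  (X + C (f k' - f k)) ^ R').coeff (i - i') * G.coeff i') /
              (RatFunc.C (f k) - RatFunc.X) ^ (R' - i)) +
          algebraMap (Polynomial F) (RatFunc F) W := by
  classical
  set Ψ : Polynomial F := ∏ k' ∈ Finset.univ.erase k, (X + C (f k' - f k)) ^ R' with hΨ
  set H : Polynomial F := Ψ * G with hH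
  set N : ℕ := R' * (K - 1) + p - 1 with hN
  set t : RatFunc F := RatFunc.C (f k) - RatFunc.X with ht
  have htp : t = algebraMap (Polynomial F) (RatFunc F) (C (f k) - X) := by
    rw [map_sub, RatFunc.algebraMap_C, RatFunc.algebraMap_X]
  have hCX : (C (f k) - X : Polynomial F) ≠ 0 := fun h => by
    simpa using congrArg (Polynomial.coeff · 1) h
  have ht0 : t ≠ 0 := by rw [htp]; exact RatFunc.algebraMap_ne_zero hCX
  -- degree bounds
  have hΨdeg : Ψ.natDegree ≤ R' * (K - 1) := by
    refine le_trans (natDegree_prod_le _ _) ?_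
    have : ∀ k' ∈ Finset.univ.erase k, ((X + C (f k' - f k)) ^ R').natDegree ≤ R' := by
      intro k' _
      refine le_trans (natDegree_pow_le) ?_
      have : (X + C (f k' - f k)).natDegree ≤ 1 := le_of_eq (natDegree_X_add_C _)
      calc R' * (X + C (f k' - f k)).natDegree ≤ R' * 1 := Nat.mul_le_mul_left _ this
        _ = R' := by ring
    refine le_trans (Finset.sum_le_card_nsmul _ _ R' this) ?_
    have hcard : (Finset.univ.erase k).card = K - 1 := by
      rw [Finset.card_erase_of_mem (Finset.mem_univ k), Finset.card_univ, Fintype.card_fin]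
    rw [hcard, smul_eq_mul, mul_comm]
  have hGdeg : G.natDegree ≤ R' + p - 2 := natDegree_le_iff_degree_le.mpr hG
  have hHdeg : H.natDegree < R' + N := by
    have h1 := natDegree_mul_le (p := Ψ) (q := G)
    rw [← hH] at h1
    have h2 : H.natDegree ≤ R' * (K - 1) + (R' + p - 2) :=
      le_trans h1 (add_le_add hΨdeg hGdeg)
    omega
  -- the tail polynomial
  refine ⟨∑ j ∈ Finset.range N, C (H.coeff (R' + j)) * (C (f k) - X) ^ j, ?_, ?_⟩
  · refine lt_of_le_of_lt (degree_sum_le _ _) ?_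
    rw [Finset.sup_lt_iff (by exact_mod_cast WithBot.bot_lt_coe N)]
    intro j hj
    refine lt_of_le_of_lt (degree_mul_le _ _) ?_
    have h1 : (C (f k) - X : Polynomial F).degree = 1 := by
      rw [← degree_neg]; simpa using degree_X_sub_C (f k)
    refine lt_of_le_of_lt (add_le_add degree_C_le (degree_pow_le _ _)) ?_
    rw [h1, zero_add]
    have : (j : WithBot ℕ) < (N : WithBot ℕ) := by
      exact_mod_cast Finset.mem_range.mp hj
    simpa using this
  · -- main identity
    have hLHS : (∏ k' ∈ Finset.univ.erase k, (RatFunc.C (f k') - RatFunc.X) ^ R') *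
        Polynomial.aeval t G = Polynomial.aeval t H := by
      rw [hH, map_mul, hΨ, map_prod]
      congr 1
      refine Finset.prod_congr rfl fun k' _ => ?_
      rw [map_pow, map_add, aeval_X, aeval_C, RatFunc.algebraMap_eq_C, ht, map_sub]
      ring_nf
    rw [hLHS, div_eq_iff (pow_ne_zero _ ht0), add_mul, Finset.sum_mul,
      aeval_eq_sum_range' hHdeg, Finset.sum_range_add]
    congr 1
    · refine Finset.sum_congr rfl fun i hi => ?_
      have hiR : i < R' := Finset.mem_range.mp hi
      have hcoeff : (∑ i' ∈ Finset.range (i + 1), Ψ.coeff (i - i') * G.coeff i') = H.coeff i := by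
        rw [hH, mul_comm, coeff_mul, Finset.Nat.sum_antidiagonal_eq_sum_range_succ_mk]
        exact Finset.sum_congr rfl fun i' _ => mul_comm _ _
      have htt : t ^ R' / t ^ (R' - i) = t ^ i := by
        rw [div_eq_iff (pow_ne_zero _ ht0), ← pow_add]
        congr 1
        omega
      rw [hcoeff, RatFunc.smul_eq_C_mul, div_mul_eq_mul_div, mul_div_assoc, htt]
    · rw [map_sum, Finset.sum_mul]
      refine Finset.sum_congr rfl fun j _ => ?_
      rw [map_mul, map_pow, RatFunc.algebraMap_C, ← htp, RatFunc.smul_eq_C_mul, pow_add]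
      ring
end

section
/- Let F be a field, and let ℓ, K_c, R', X be positive integers with L = ℓK_c and R = R'(ℓ+1)K_c + 2X − 1, and suppose |F| ≥ R + L. Let f_{1,1}, …, f_{ℓ,K_c}, α_1, …, α_R be R + L pairwise distinct elements of F. Suppose scalars D_{l,k,i} ∈ F (for l ∈ {1,…,ℓ}, k ∈ {1,…,K_c}, i ∈ {0,…,R'−1}) and J_x ∈ F (for x ∈ {1,…,R'K_c+2X−1}) satisfy Σ_{l,k} Σ_{i=0}^{R'−1} D_{l,k,i} / (f_{l,k} − α_s)^{R'−i} + Σ_{x=1}^{R'K_c+2X−1} J_x · α_s^{x−1} = 0 for every s ∈ {1,…,R}. Then all D_{l,k,i} = 0 and all J_x = 0. -/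
open Polynomial Finset

-- coefficient extraction for monomial sums
lemma monomial_sum_eq_zero {F : Type*} [Field F] {m : ℕ} (E : Fin m → F)
    (h : ∑ i : Fin m, C (E i) * X ^ (i : ℕ) = (0 : F[X])) : ∀ i, E i = 0 := by
  intro i
  have := congrArg (fun p => Polynomial.coeff p (i : ℕ)) h
  simp only [finset_sum_coeff, coeff_C_mul, coeff_X_pow, coeff_zero] at this
  rw [Finset.sum_eq_single i] at this
  · simpa using this
  · intro b _ hb
    simp only [Fin.val_eq_val, if_neg (Ne.symm hb), mul_zero]
  · simp

-- shifted monomial sums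
lemma shifted_sum_eq_zero {F : Type*} [Field F] {m : ℕ} (c : F) (E : Fin m → F)
    (h : ∑ i : Fin m, C (E i) * (X - C c) ^ (i : ℕ) = (0 : F[X])) : ∀ i, E i = 0 := by
  set p : F[X] := ∑ i : Fin m, C (E i) * X ^ (i : ℕ) with hp
  have hcomp : p.comp (X - C c) = 0 := by
    rw [hp, Polynomial.sum_comp]
    simpa [mul_comp, pow_comp] using h
  have : p = 0 := by
    have := congrArg (fun q => q.comp (X + C c)) hcomp
    simpa [comp_assoc, sub_add_cancel] using this
  exact monomial_sum_eq_zero E (by rw [← hp, this])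

/-- Uniqueness of partial fraction decompositions (polynomial form). -/
lemma pf_unique {F : Type*} [Field F] {ι : Type*} [Fintype ι] [DecidableEq ι]
    {R' : ℕ} (hR' : 0 < R') (c : ι → F) (hc : Function.Injective c)
    (E : ι → Fin R' → F) (Jp : F[X])
    (h : (∑ q : ι, (∑ i : Fin R', C (E q i) * (X - C (c q)) ^ (i : ℕ)) *
            ∏ q' ∈ Finset.univ.erase q, (X - C (c q')) ^ R') +
          Jp * ∏ q : ι, (X - C (c q)) ^ R' = 0) :
    (∀ q i, E q i = 0) ∧ Jp = 0 := by
  set T : ι → F[X] := fun q =>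
    (∑ i : Fin R', C (E q i) * (X - C (c q)) ^ (i : ℕ)) *
      ∏ q' ∈ Finset.univ.erase q, (X - C (c q')) ^ R' with hT
  have hE : ∀ q i, E q i = 0 := by
    intro q0
    have hsplit : ∑ q : ι, T q = T q0 + ∑ q ∈ Finset.univ.erase q0, T q :=
      (Finset.add_sum_erase _ _ (Finset.mem_univ q0)).symm
    have hdvd : (X - C (c q0)) ^ R' ∣ T q0 := by
      have h1 : T q0 = -(∑ q ∈ Finset.univ.erase q0, T q) -
          Jp * ∏ q : ι, (X - C (c q)) ^ R' := by
        have := h; rw [hsplit] at this; linear_combination this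
      rw [h1]
      apply dvd_sub
      · rw [dvd_neg]
        apply Finset.dvd_sum
        intro q hq
        have hq0 : q0 ∈ Finset.univ.erase q := by
          simp [Finset.mem_erase, (Finset.ne_of_mem_erase hq).symm]
        exact (Finset.dvd_prod_of_mem (fun q' => (X - C (c q')) ^ R') hq0).mul_left _
      · exact (Finset.dvd_prod_of_mem (fun q' => (X - C (c q')) ^ R')
          (Finset.mem_univ q0)).mul_left Jp
    have hcop : IsCoprime ((X - C (c q0)) ^ R')
        (∏ q' ∈ Finset.univ.erase q0, (X - C (c q')) ^ R') := by
      apply IsCoprime.prod_right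
      intro q' hq'
      exact (Polynomial.pairwise_coprime_X_sub_C hc
        (Finset.ne_of_mem_erase hq').symm).pow
    have hdvdH : (X - C (c q0)) ^ R' ∣
        ∑ i : Fin R', C (E q0 i) * (X - C (c q0)) ^ (i : ℕ) :=
      hcop.dvd_of_dvd_mul_right hdvd
    have hdeg : (∑ i : Fin R', C (E q0 i) * (X - C (c q0)) ^ (i : ℕ)).natDegree ≤ R' - 1 := by
      apply Polynomial.natDegree_sum_le_of_forall_le
      intro i _
      calc (C (E q0 i) * (X - C (c q0)) ^ (i : ℕ)).natDegree
          ≤ ((X - C (c q0)) ^ (i : ℕ)).natDegree := Polynomial.natDegree_C_mul_le _ _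
        _ ≤ (i : ℕ) := by
            simp [Polynomial.natDegree_pow, Polynomial.natDegree_X_sub_C]
        _ ≤ R' - 1 := by omega
    have hH : ∑ i : Fin R', C (E q0 i) * (X - C (c q0)) ^ (i : ℕ) = 0 := by
      by_contra hne
      have := Polynomial.natDegree_le_of_dvd hdvdH hne
      rw [Polynomial.natDegree_pow, Polynomial.natDegree_X_sub_C, mul_one] at this
      omega
    exact shifted_sum_eq_zero _ _ hH
  refine ⟨hE, ?_⟩
  have hT0 : ∀ q, T q = 0 := by
    intro q; rw [hT]; simp [hE]
  have h2 : Jp * ∏ q : ι, (X - C (c q)) ^ R' = 0 := by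
    have := h
    rw [Finset.sum_congr rfl (fun q _ => hT0 q)] at this
    simpa using this
  have hprod : (∏ q : ι, (X - C (c q)) ^ R') ≠ 0 :=
    (Polynomial.monic_prod_of_monic _ _
      (fun q _ => (Polynomial.monic_X_sub_C (c q)).pow R')).ne_zero
  rcases mul_eq_zero.mp h2 with h3 | h3
  · exact h3
  · exact absurd h3 hprod


/-- **Linear independence form of GCSA-NA decodability.**
With `L = ℓ K_c`, `R = R'(ℓ+1)K_c + 2X - 1`, `|F| ≥ R + L`, and
`f_{l,k}, α_s` pairwise distinct: if scalars `D_{l,k,i}` and `J_x` satisfy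
`Σ_{l,k,i} D_{l,k,i}/(f_{l,k} - α_s)^{R'-i} + Σ_x J_x α_s^{x-1} = 0` for every
`s ∈ [R]`, then all `D_{l,k,i}` and all `J_x` vanish. -/
theorem gcsa_na_uniqueness
    (F : Type*) [Field F] (ℓ K_c R' X : ℕ)
    (hℓ : 0 < ℓ) (hK : 0 < K_c) (hR' : 0 < R') (hX : 0 < X)
    (L R : ℕ) (hL : L = ℓ * K_c) (hR : R = R' * (ℓ + 1) * K_c + 2 * X - 1)
    (hcard : ((R + L : ℕ) : Cardinal) ≤ Cardinal.mk F)
    (f : Fin ℓ → Fin K_c → F) (α : Fin R → F)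
    (hdist : Function.Injective
      (Sum.elim (fun q : Fin ℓ × Fin K_c => f q.1 q.2) α))
    (D : Fin ℓ → Fin K_c → Fin R' → F)
    (J : Fin (R' * K_c + 2 * X - 1) → F)
    (hzero : ∀ s : Fin R,
      (∑ l : Fin ℓ, ∑ k : Fin K_c, ∑ i : Fin R',
          D l k i / (f l k - α s) ^ (R' - (i : ℕ))) +
        ∑ x : Fin (R' * K_c + 2 * X - 1), J x * α s ^ (x : ℕ) = 0) :
    (∀ (l : Fin ℓ) (k : Fin K_c) (i : Fin R'), D l k i = 0) ∧
      ∀ x : Fin (R' * K_c + 2 * X - 1), J x = 0 := by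
  classical
  set c : (Fin ℓ × Fin K_c) → F := fun q => f q.1 q.2 with hcdef
  have hc : Function.Injective c := fun a b hab => by
    have : Sum.elim c α (Sum.inl a) = Sum.elim c α (Sum.inl b) := hab
    simpa using hdist this
  have hαinj : Function.Injective α := fun a b hab => by
    have : Sum.elim c α (Sum.inr a) = Sum.elim c α (Sum.inr b) := hab
    simpa using hdist this
  have hne : ∀ (q : Fin ℓ × Fin K_c) (s : Fin R), α s - c q ≠ 0 := by
    intro q s
    refine sub_ne_zero.mpr ?_
    intro hEq
    have : Sum.elim c α (Sum.inr s) = Sum.elim c α (Sum.inl q) := by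
      simp only [Sum.elim_inr, Sum.elim_inl]; exact hEq
    exact absurd (hdist this) (by simp)
  set E : (Fin ℓ × Fin K_c) → Fin R' → F :=
    fun q i => (-1 : F) ^ (R' - (i : ℕ)) * D q.1 q.2 i with hEdef
  set Jp : F[X] := ∑ x : Fin (R' * K_c + 2 * X - 1),
    C (J x) * Polynomial.X ^ (x : ℕ) with hJpdef
  set Q : F[X] :=
    (∑ q : Fin ℓ × Fin K_c,
        (∑ i : Fin R', C (E q i) * (Polynomial.X - C (c q)) ^ (i : ℕ)) *
          ∏ q' ∈ Finset.univ.erase q, (Polynomial.X - C (c q')) ^ R') +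
      Jp * ∏ q : Fin ℓ × Fin K_c, (Polynomial.X - C (c q)) ^ R' with hQdef
  -- evaluation at each α s is zero
  have heval : ∀ s : Fin R, Q.eval (α s) = 0 := by
    intro s
    have hz : (∑ q : Fin ℓ × Fin K_c, ∑ i : Fin R',
        D q.1 q.2 i / (c q - α s) ^ (R' - (i : ℕ))) +
        ∑ x : Fin (R' * K_c + 2 * X - 1), J x * α s ^ (x : ℕ) = 0 := by
      have h0 := hzero s
      rw [← Finset.sum_product', Finset.univ_product_univ] at h0
      exact h0
    have key : ∀ (q : Fin ℓ × Fin K_c) (i : Fin R'),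
        E q i * (α s - c q) ^ (i : ℕ) =
          (α s - c q) ^ R' * (D q.1 q.2 i / (c q - α s) ^ (R' - (i : ℕ))) := by
      intro q i
      set t := α s - c q with htdef
      have ht : t ≠ 0 := hne q s
      have hct : c q - α s = -t := by rw [htdef]; ring
      have hsum : R' - (i : ℕ) + (i : ℕ) = R' := Nat.sub_add_cancel i.isLt.le
      show ((-1 : F) ^ (R' - (i : ℕ)) * D q.1 q.2 i) * t ^ (i : ℕ) =
        t ^ R' * (D q.1 q.2 i / (c q - α s) ^ (R' - (i : ℕ)))
      rw [hct, neg_pow t (R' - (i : ℕ))]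
      have hpow : t ^ R' = t ^ (R' - (i : ℕ)) * t ^ (i : ℕ) := by
        rw [← pow_add, hsum]
      rw [hpow]
      have h1 : ((-1 : F) ^ (R' - (i : ℕ))) * ((-1 : F) ^ (R' - (i : ℕ))) = 1 := by
        rw [← mul_pow]; simp
      field_simp
      linear_combination (D q.1 q.2 i) * h1
    calc Q.eval (α s)
        = (∑ q : Fin ℓ × Fin K_c,
            (∑ i : Fin R', E q i * (α s - c q) ^ (i : ℕ)) *
              ∏ q' ∈ Finset.univ.erase q, (α s - c q') ^ R') +
          (∑ x : Fin (R' * K_c + 2 * X - 1), J x * α s ^ (x : ℕ)) *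
            ∏ q : Fin ℓ × Fin K_c, (α s - c q) ^ R' := by
          simp [hQdef, hJpdef, Polynomial.eval_finset_sum, Polynomial.eval_prod]
      _ = (∏ q : Fin ℓ × Fin K_c, (α s - c q) ^ R') *
            ((∑ q : Fin ℓ × Fin K_c, ∑ i : Fin R',
                D q.1 q.2 i / (c q - α s) ^ (R' - (i : ℕ))) +
              ∑ x : Fin (R' * K_c + 2 * X - 1), J x * α s ^ (x : ℕ)) := by
          rw [mul_add, Finset.mul_sum]
          congr 1
          · apply Finset.sum_congr rfl
            intro q _
            rw [Finset.sum_mul, Finset.mul_sum]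
            apply Finset.sum_congr rfl
            intro i _
            rw [key q i,
              ← Finset.mul_prod_erase Finset.univ (fun q' => (α s - c q') ^ R')
                (Finset.mem_univ q)]
            ring
          · ring
      _ = 0 := by rw [hz, mul_zero]
  -- degree bound
  have hdeg : Q.natDegree < R := by
    set n := ℓ * K_c with hn
    have hcardι : Fintype.card (Fin ℓ × Fin K_c) = n := by simp [hn]
    have hprodA : ∀ q : Fin ℓ × Fin K_c,
        (∏ q' ∈ Finset.univ.erase q, (Polynomial.X - C (c q')) ^ R').natDegree
          ≤ (n - 1) * R' := by
      intro q
      refine (Polynomial.natDegree_prod_le _ _).trans ?_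
      have : ∀ q' ∈ Finset.univ.erase q,
          ((Polynomial.X - C (c q')) ^ R').natDegree = R' := by
        intro q' _; simp [Polynomial.natDegree_pow, Polynomial.natDegree_X_sub_C]
      rw [Finset.sum_congr rfl this, Finset.sum_const, smul_eq_mul,
        Finset.card_erase_of_mem (Finset.mem_univ q), Finset.card_univ, hcardι]
    have hprodB : (∏ q : Fin ℓ × Fin K_c,
        (Polynomial.X - C (c q)) ^ R').natDegree ≤ n * R' := by
      refine (Polynomial.natDegree_prod_le _ _).trans ?_
      have : ∀ q ∈ (Finset.univ : Finset (Fin ℓ × Fin K_c)),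
          ((Polynomial.X - C (c q)) ^ R').natDegree = R' := by
        intro q _; simp [Polynomial.natDegree_pow, Polynomial.natDegree_X_sub_C]
      rw [Finset.sum_congr rfl this, Finset.sum_const, smul_eq_mul,
        Finset.card_univ, hcardι]
    have hJpdeg : Jp.natDegree ≤ (R' * K_c + 2 * X - 1) - 1 := by
      rw [hJpdef]
      apply Polynomial.natDegree_sum_le_of_forall_le
      intro x _
      calc (C (J x) * Polynomial.X ^ (x : ℕ)).natDegree
          ≤ ((Polynomial.X : F[X]) ^ (x : ℕ)).natDegree :=
            Polynomial.natDegree_C_mul_le _ _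
        _ ≤ (x : ℕ) := by simp
        _ ≤ (R' * K_c + 2 * X - 1) - 1 := by have := x.isLt; omega
    have hsumdeg : (∑ q : Fin ℓ × Fin K_c,
        (∑ i : Fin R', C (E q i) * (Polynomial.X - C (c q)) ^ (i : ℕ)) *
          ∏ q' ∈ Finset.univ.erase q, (Polynomial.X - C (c q')) ^ R').natDegree
        ≤ (R' - 1) + (n - 1) * R' := by
      apply Polynomial.natDegree_sum_le_of_forall_le
      intro q _
      refine (Polynomial.natDegree_mul_le).trans (add_le_add ?_ (hprodA q))
      apply Polynomial.natDegree_sum_le_of_forall_le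
      intro i _
      calc (C (E q i) * (Polynomial.X - C (c q)) ^ (i : ℕ)).natDegree
          ≤ ((Polynomial.X - C (c q)) ^ (i : ℕ)).natDegree :=
            Polynomial.natDegree_C_mul_le _ _
        _ ≤ (i : ℕ) := by
            simp [Polynomial.natDegree_pow, Polynomial.natDegree_X_sub_C]
        _ ≤ R' - 1 := by have := i.isLt; omega
    have hQle : Q.natDegree ≤
        max ((R' - 1) + (n - 1) * R') (((R' * K_c + 2 * X - 1) - 1) + n * R') := by
      rw [hQdef]
      refine (Polynomial.natDegree_add_le _ _).trans ?_
      exact max_le_max hsumdeg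
        ((Polynomial.natDegree_mul_le).trans (add_le_add hJpdeg hprodB))
    have hRval : R = n * R' + (R' * K_c + 2 * X - 1) := by
      rw [hR, hn]
      have h2 : R' * (ℓ + 1) * K_c = ℓ * K_c * R' + R' * K_c := by ring
      rw [h2]
      have : 1 ≤ R' * K_c := Nat.one_le_iff_ne_zero.mpr (by positivity)
      omega
    have hA : R' ≤ n * R' := Nat.le_mul_of_pos_left R' (by positivity)
    have hB : R' ≤ R' * K_c := Nat.le_mul_of_pos_right R' hK
    have hsub : (n - 1) * R' = n * R' - R' := by rw [Nat.sub_mul, one_mul]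
    refine lt_of_le_of_lt hQle ?_
    rw [hRval]
    apply max_lt <;> omega
  have hQ0 : Q = 0 :=
    Polynomial.eq_zero_of_natDegree_lt_card_of_eval_eq_zero Q hαinj heval
      (by simpa using hdeg)
  obtain ⟨hE0, hJ0⟩ := pf_unique hR' c hc E Jp hQ0
  constructor
  · intro l k i
    have hE := hE0 (l, k) i
    have hE' : (-1 : F) ^ (R' - (i : ℕ)) * D l k i = 0 := hE
    have hpow : ((-1 : F) ^ (R' - (i : ℕ))) ≠ 0 :=
      pow_ne_zero _ (neg_ne_zero.mpr one_ne_zero)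
    exact (mul_eq_zero.mp hE').resolve_left hpow
  · exact monomial_sum_eq_zero J (by exact hJ0)
end
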